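/- arXiv:2605.26282 — 5 statements merged into one kernel-verified Lean document; each statement's English description precedes it below -/
import Mathlib

section
/- Let π and β be policies with β(a|z) > 0 for all (z,a), let Q : Z × A → ℝ satisfy |Q(z,a)| ≤ M for all (z,a), and let ε ≥ 0 satisfy D_KL(π(·|z) ‖ β(·|z)) ≤ ε for all z ∈ Z. Then for every (z,a) ∈ Z × A, |(T^π Q)(z,a) − (T^β Q)(z,a)| ≤ γ · M · √(2ε). -/
open scoped BigOperators

/-- The Bellman evaluation operator of policy `μpol`:
`(T^μ Q)(z,a) = R(z,a) + γ · Σ_{a'} μ(a'|F(z,a)) · Q(F(z,a), a')`. -/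
noncomputable def bellman {Z A : Type*} [Fintype A]
    (F : Z × A → Z) (R : Z × A → ℝ) (γ : ℝ)
    (μpol : Z → A → ℝ) (Q : Z × A → ℝ) : Z × A → ℝ :=
  fun p => R p + γ * ∑ a' : A, μpol (F p) a' * Q (F p, a')

/-- Kullback–Leibler divergence between probability mass functions on a finite
type (with the convention `0 · log 0 = 0`, automatic since `Real.log 0 = 0`). -/
noncomputable def klFin {A : Type*} [Fintype A] (p q : A → ℝ) : ℝ :=
  ∑ a : A, p a * Real.log (p a / q a)

/-! The two backups differ only through the policy at the successor state `w = F (z, a)`, so the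
gap is `γ |∑ (π w - β w) Q (w, ·)| ≤ γ M ‖π w - β w‖₁`, and Pinsker's inequality
`‖p - q‖₁ ≤ √(2 D_KL(p ‖ q))` finishes. For Pinsker, the scalar bound
`x log x - x + 1 ≥ 3 (x - 1)² / (2 (x + 2))` (obtained from `log x ≥ pinskerRational x`, whose
difference has derivative `(x - 1)³ / (x² (x + 2)²)`) gives
`(p - q)² / (p + 2q) ≤ 2/3 (p log (p/q) - p + q)` termwise; summing and applying Cauchy–Schwarz
in Sedrakyan's form with weights `p + 2q`, which sum to `3`, yields `‖p - q‖₁² ≤ 2 D_KL(p ‖ q)`. -/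

section

open Real Set

noncomputable def pinskerRational (x : ℝ) : ℝ :=
  (x - 1) * (5 * x + 1) / (2 * x * (x + 2))

lemma hasDerivAt_log_sub_pinskerRational {x : ℝ} (hx : 0 < x) :
    HasDerivAt (fun y => log y - pinskerRational y)
      ((x - 1) ^ 3 / (x ^ 2 * (x + 2) ^ 2)) x := by
  have hnum : HasDerivAt (fun y => (y - 1) * (5 * y + 1)) (10 * x - 4) x :=
    (((hasDerivAt_id' x).sub_const 1).fun_mul
      (((hasDerivAt_id' x).const_mul 5).add_const 1)).congr_deriv (by ring)
  have hden : HasDerivAt (fun y => 2 * y * (y + 2)) (4 * x + 4) x :=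
    (((hasDerivAt_id' x).const_mul 2).fun_mul ((hasDerivAt_id' x).add_const 2)).congr_deriv
      (by ring)
  refine ((hasDerivAt_log hx.ne').fun_sub (hnum.fun_div hden (by positivity))).congr_deriv ?_
  field_simp
  ring

lemma pinskerRational_le_log {x : ℝ} (hx : 0 < x) : pinskerRational x ≤ log x := by
  set g := fun y => log y - pinskerRational y
  have hg : ∀ y ∈ Ioi (0 : ℝ), HasDerivAt g ((y - 1) ^ 3 / (y ^ 2 * (y + 2) ^ 2)) y :=
    fun y hy => hasDerivAt_log_sub_pinskerRational hy
  suffices 0 ≤ g x by simpa [g] using this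
  have hg1 : g 1 = 0 := by norm_num [g, pinskerRational]
  rcases le_total 1 x with h1 | h1
  · have hmono : MonotoneOn g (Ici 1) := by
      refine monotoneOn_of_hasDerivWithinAt_nonneg (convex_Ici 1)
        (fun y hy => (hg y (zero_lt_one.trans_le (mem_Ici.1 hy))).continuousAt.continuousWithinAt)
        (fun y hy => (hg y ?_).hasDerivWithinAt) (fun y hy => ?_)
      all_goals rw [interior_Ici] at hy
      · exact zero_lt_one.trans (mem_Ioi.1 hy)
      · have : 0 ≤ y - 1 := sub_nonneg.2 (le_of_lt hy)
        positivity
    simpa [hg1] using hmono self_mem_Ici h1 h1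
  · have hanti : AntitoneOn g (Ioc 0 1) := by
      refine antitoneOn_of_hasDerivWithinAt_nonpos (convex_Ioc 0 1)
        (fun y hy => (hg y hy.1).continuousAt.continuousWithinAt)
        (fun y hy => (hg y ?_).hasDerivWithinAt) (fun y hy => ?_)
      all_goals rw [interior_Ioc] at hy
      · exact hy.1
      · apply div_nonpos_of_nonpos_of_nonneg _ (by positivity)
        exact Odd.pow_nonpos (by decide) (by linarith [hy.2])
    simpa [hg1] using hanti ⟨hx, h1⟩ ⟨one_pos, le_rfl⟩ h1

lemma sub_mul_div_le_mul_log_div {p q : ℝ} (hp : 0 ≤ p) (hq : 0 < q) :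
    (p - q) * (5 * p + q) / (2 * (p + 2 * q)) ≤ p * log (p / q) := by
  rcases hp.eq_or_lt with rfl | hp'
  · rw [zero_mul]
    exact div_nonpos_of_nonpos_of_nonneg (by nlinarith) (by positivity)
  have h := mul_le_mul_of_nonneg_left (pinskerRational_le_log (div_pos hp' hq)) hp
  refine (le_of_eq ?_).trans h
  rw [pinskerRational]
  field_simp

lemma sq_sub_div_le_mul_log_div {p q : ℝ} (hp : 0 ≤ p) (hq : 0 < q) :
    (p - q) ^ 2 / (p + 2 * q) ≤ 2 / 3 * (p * log (p / q) - p + q) := by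
  have h := sub_mul_div_le_mul_log_div hp hq
  have hpq : 0 < p + 2 * q := by positivity
  rw [div_le_iff₀ (by positivity)] at h
  rw [div_le_iff₀ hpq]
  nlinarith

theorem sum_abs_sub_le_sqrt_two_mul_klFin {A : Type*} [Fintype A] {p q : A → ℝ}
    (hp0 : ∀ a, 0 ≤ p a) (hp1 : ∑ a, p a = 1) (hq0 : ∀ a, 0 < q a) (hq1 : ∑ a, q a = 1) :
    ∑ a, |p a - q a| ≤ √(2 * klFin p q) := by
  have hpq : ∀ a, 0 < p a + 2 * q a := fun a => by linarith [hp0 a, hq0 a]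
  have hsum : ∑ a, (p a + 2 * q a) = 3 := by
    rw [Finset.sum_add_distrib, ← Finset.mul_sum, hp1, hq1]; norm_num
  have hkl : ∑ a, (p a * log (p a / q a) - p a + q a) = klFin p q := by
    simp only [Finset.sum_add_distrib, Finset.sum_sub_distrib, hp1, hq1, klFin]; ring
  refine le_sqrt_of_sq_le ?_
  calc (∑ a, |p a - q a|) ^ 2 = 3 * ((∑ a, |p a - q a|) ^ 2 / ∑ a, (p a + 2 * q a)) := by
        rw [hsum]; ring
    _ ≤ 3 * ∑ a, |p a - q a| ^ 2 / (p a + 2 * q a) := by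
        gcongr
        exact Finset.sq_sum_div_le_sum_sq_div _ _ fun a _ => hpq a
    _ ≤ 3 * ∑ a, 2 / 3 * (p a * log (p a / q a) - p a + q a) := by
        gcongr with a
        rw [sq_abs]
        exact sq_sub_div_le_mul_log_div (hp0 a) (hq0 a)
    _ = 2 * klFin p q := by rw [← Finset.mul_sum, hkl]; ring

end

lemma abs_sum_mul_le_sum_abs_mul {ι : Type*} (s : Finset ι) (f g : ι → ℝ) {M : ℝ}
    (hg : ∀ i ∈ s, |g i| ≤ M) : |∑ i ∈ s, f i * g i| ≤ (∑ i ∈ s, |f i|) * M := by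
  rw [Finset.sum_mul]
  refine (Finset.abs_sum_le_sum_abs _ _).trans (Finset.sum_le_sum fun i hi => ?_)
  rw [abs_mul]
  exact mul_le_mul_of_nonneg_left (hg i hi) (abs_nonneg _)

lemma bellman_sub_bellman {Z A : Type*} [Fintype A] (F : Z × A → Z) (R : Z × A → ℝ) (γ : ℝ)
    (μ ν : Z → A → ℝ) (Q : Z × A → ℝ) (p : Z × A) :
    bellman F R γ μ Q p - bellman F R γ ν Q p =
      γ * ∑ a, (μ (F p) a - ν (F p) a) * Q (F p, a) := by
  simp only [bellman, sub_mul, Finset.sum_sub_distrib]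
  ring

theorem bellman_gap_le_sqrt_kl_general
    {Z A : Type*} [Fintype A]
    (F : Z × A → Z) (R : Z × A → ℝ) (γ : ℝ) (hγ0 : 0 < γ)
    (π β : Z → A → ℝ)
    (hπ0 : ∀ z a, 0 ≤ π z a) (hπ1 : ∀ z, ∑ a : A, π z a = 1)
    (hβ0 : ∀ z a, 0 < β z a) (hβ1 : ∀ z, ∑ a : A, β z a = 1)
    (Q : Z × A → ℝ) (M : ℝ) (hQ : ∀ z a, |Q (z, a)| ≤ M)
    (ε : ℝ) (hKL : ∀ z, klFin (π z) (β z) ≤ ε)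
    (z : Z) (a : A) :
    |bellman F R γ π Q (z, a) - bellman F R γ β Q (z, a)| ≤
      γ * M * Real.sqrt (2 * ε) := by
  set w := F (z, a)
  have hM : 0 ≤ M := (abs_nonneg _).trans (hQ z a)
  rw [bellman_sub_bellman, abs_mul, abs_of_pos hγ0, mul_assoc]
  gcongr
  calc |∑ a', (π w a' - β w a') * Q (w, a')| ≤ (∑ a', |π w a' - β w a'|) * M :=
        abs_sum_mul_le_sum_abs_mul _ _ _ fun a' _ => hQ w a'
    _ ≤ Real.sqrt (2 * klFin (π w) (β w)) * M := by
        gcongr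
        exact sum_abs_sub_le_sqrt_two_mul_klFin (hπ0 w) (hπ1 w) (hβ0 w) (hβ1 w)
    _ ≤ Real.sqrt (2 * ε) * M := by grw [hKL w]
    _ = M * Real.sqrt (2 * ε) := mul_comm _ _

/-- if `D_KL(π(·|z) ‖ β(·|z)) ≤ ε` for all `z` and `|Q| ≤ M`, then the
Bellman operator gap is bounded by `γ · M · √(2ε)`. -/
theorem bellman_gap_le_sqrt_kl
    {Z A : Type*} [Fintype Z] [Fintype A] [Nonempty Z] [Nonempty A]
    (F : Z × A → Z) (R : Z × A → ℝ) (γ : ℝ) (hγ0 : 0 < γ) (hγ1 : γ < 1)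
    (π β : Z → A → ℝ)
    (hπ0 : ∀ z a, 0 ≤ π z a) (hπ1 : ∀ z, ∑ a : A, π z a = 1)
    (hβ0 : ∀ z a, 0 < β z a) (hβ1 : ∀ z, ∑ a : A, β z a = 1)
    (Q : Z × A → ℝ) (M : ℝ) (hQ : ∀ z a, |Q (z, a)| ≤ M)
    (ε : ℝ) (hε : 0 ≤ ε) (hKL : ∀ z, klFin (π z) (β z) ≤ ε)
    (z : Z) (a : A) :
    |bellman F R γ π Q (z, a) - bellman F R γ β Q (z, a)| ≤
      γ * M * Real.sqrt (2 * ε) :=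
  bellman_gap_le_sqrt_kl_general F R γ hγ0 π β hπ0 hπ1 hβ0 hβ1 Q M hQ ε hKL z a
end

section
/- Let p and q be probability mass functions on a nonempty finite type A with q(a) > 0 for all a, and let f : A → ℝ satisfy |f(a)| ≤ M for all a. Then |Σ_{a ∈ A} p(a) f(a) − Σ_{a ∈ A} q(a) f(a)| ≤ M · √(2 · D_KL(p‖q)). -/
/-!
The gap `t log t - t + 1 - 3 (t - 1)² / (2 (t + 2))` is convex on `[0, ∞)` with a critical
point at `t = 1`, hence nonnegative. Applied at `t = p(a)/q(a)`, scaled by `q(a)` and summed, it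
bounds `KL(p‖q)` below by `(3/2) Σ (p - q)² / (p + 2q)`; since the weights `p + 2q` sum to `3`,
Cauchy–Schwarz turns this into Pinsker's inequality `‖p - q‖₁² ≤ 2 KL(p‖q)`. Finally
`|E_p f - E_q f| ≤ M ‖p - q‖₁`.
-/

open scoped BigOperators

open Real InformationTheory Set

lemma hasDerivAt_log_sub_rational {t : ℝ} (ht : 0 < t) :
    HasDerivAt (fun t ↦ log t - 3 * (t - 1) * (t + 5) / (2 * (t + 2) ^ 2))
      ((t - 1) ^ 2 * (t + 8) / (t * (t + 2) ^ 3)) t := by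
  have hnum : HasDerivAt (fun t : ℝ ↦ 3 * (t - 1) * (t + 5)) (3 * (t + 5) + 3 * (t - 1)) t :=
    ((((hasDerivAt_id t).sub_const 1).const_mul 3).mul ((hasDerivAt_id t).add_const 5)).congr_deriv
      (by simp)
  have hden : HasDerivAt (fun t : ℝ ↦ 2 * (t + 2) ^ 2) (2 * (2 * (t + 2))) t := by
    simpa using (((hasDerivAt_id t).add_const 2).pow 2).const_mul 2
  refine ((hasDerivAt_log ht.ne').sub (hnum.div hden (by positivity))).congr_deriv ?_
  field_simp
  ring

lemma monotoneOn_log_sub_rational :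
    MonotoneOn (fun t ↦ log t - 3 * (t - 1) * (t + 5) / (2 * (t + 2) ^ 2)) (Ioi 0) := by
  refine monotoneOn_of_deriv_nonneg (convex_Ioi 0)
    (fun t ht ↦ (hasDerivAt_log_sub_rational ht).continuousAt.continuousWithinAt)
    (fun t ht ↦ ?_) (fun t ht ↦ ?_)
  all_goals rw [interior_Ioi] at ht
  · exact (hasDerivAt_log_sub_rational ht).differentiableAt.differentiableWithinAt
  · have ht : 0 < t := ht
    rw [(hasDerivAt_log_sub_rational ht).deriv]
    positivity

lemma hasDerivAt_klFun_sub_quadratic {t : ℝ} (ht : 0 < t) :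
    HasDerivAt (fun t ↦ klFun t - 3 * (t - 1) ^ 2 / (2 * (t + 2)))
      (log t - 3 * (t - 1) * (t + 5) / (2 * (t + 2) ^ 2)) t := by
  have hnum : HasDerivAt (fun t : ℝ ↦ 3 * (t - 1) ^ 2) (3 * (2 * (t - 1))) t := by
    simpa using (((hasDerivAt_id t).sub_const 1).pow 2).const_mul 3
  have hden : HasDerivAt (fun t : ℝ ↦ 2 * (t + 2)) 2 t := by
    simpa using ((hasDerivAt_id t).add_const 2).const_mul 2
  refine ((hasDerivAt_klFun ht.ne').sub (hnum.div hden (by positivity))).congr_deriv ?_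
  field_simp
  ring

lemma convexOn_klFun_sub_quadratic :
    ConvexOn ℝ (Ici 0) (fun t ↦ klFun t - 3 * (t - 1) ^ 2 / (2 * (t + 2))) := by
  refine MonotoneOn.convexOn_of_deriv (convex_Ici 0) ?_ ?_ ?_
  · refine continuous_klFun.continuousOn.sub (ContinuousOn.div (by fun_prop) (by fun_prop) ?_)
    intro t (ht : 0 ≤ t)
    positivity
  all_goals rw [interior_Ici]
  · exact fun t ht ↦ (hasDerivAt_klFun_sub_quadratic ht).differentiableAt.differentiableWithinAt
  · exact monotoneOn_log_sub_rational.congr fun t ht ↦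
      (hasDerivAt_klFun_sub_quadratic ht).deriv.symm

lemma quadratic_div_le_klFun {t : ℝ} (ht : 0 ≤ t) :
    3 * (t - 1) ^ 2 / (2 * (t + 2)) ≤ klFun t := by
  have hderiv_one := (hasDerivAt_klFun_sub_quadratic (t := 1) one_pos).hasDerivWithinAt.derivWithin
    (uniqueDiffWithinAt_Ioi 1)
  norm_num at hderiv_one
  have hmin := convexOn_klFun_sub_quadratic.isMinOn_of_rightDeriv_eq_zero (x := 1)
    (by simp) hderiv_one ht
  simpa [klFun_one] using hmin

lemma sq_sub_div_le_mul_klFun {p q : ℝ} (hp : 0 ≤ p) (hq : 0 < q) :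
    3 * (p - q) ^ 2 / (2 * (p + 2 * q)) ≤ q * klFun (p / q) := by
  have h := mul_le_mul_of_nonneg_left (quadratic_div_le_klFun (div_nonneg hp hq.le)) hq.le
  refine Eq.trans_le ?_ h
  field_simp

theorem sq_sum_abs_sub_le_two_mul_klFin {ι : Type*} [Fintype ι] (p q : ι → ℝ)
    (hp0 : ∀ i, 0 ≤ p i) (hp1 : ∑ i, p i = 1) (hq0 : ∀ i, 0 < q i) (hq1 : ∑ i, q i = 1) :
    (∑ i, |p i - q i|) ^ 2 ≤ 2 * klFin p q := by
  have hweight : ∀ i, 0 < p i + 2 * q i := fun i ↦ by linarith [hp0 i, hq0 i]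
  have hweight_sum : ∑ i, (p i + 2 * q i) = 3 := by
    rw [Finset.sum_add_distrib, ← Finset.mul_sum, hp1, hq1]
    norm_num
  have hklFin : ∑ i, q i * klFun (p i / q i) = klFin p q := by
    have hterm : ∀ i, q i * klFun (p i / q i) = p i * log (p i / q i) + q i - p i := fun i ↦ by
      have := (hq0 i).ne'
      rw [klFun_apply]
      field_simp
    simp only [hterm, Finset.sum_sub_distrib, Finset.sum_add_distrib, hp1, hq1, klFin]
    ring
  calc (∑ i, |p i - q i|) ^ 2
      = 3 * ((∑ i, |p i - q i|) ^ 2 / ∑ i, (p i + 2 * q i)) := by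
        rw [hweight_sum]
        ring
    _ ≤ 3 * ∑ i, |p i - q i| ^ 2 / (p i + 2 * q i) := by
        gcongr
        exact Finset.sq_sum_div_le_sum_sq_div _ _ fun i _ ↦ hweight i
    _ = 2 * ∑ i, 3 * (p i - q i) ^ 2 / (2 * (p i + 2 * q i)) := by
        rw [Finset.mul_sum, Finset.mul_sum]
        refine Finset.sum_congr rfl fun i _ ↦ ?_
        rw [sq_abs]
        field_simp
    _ ≤ 2 * ∑ i, q i * klFun (p i / q i) := by
        gcongr with i
        exact sq_sub_div_le_mul_klFun (hp0 i) (hq0 i)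
    _ = 2 * klFin p q := by rw [hklFin]

theorem abs_expectation_sub_le_sqrt_kl_general
    {A : Type*} [Fintype A]
    (p q : A → ℝ)
    (hp0 : ∀ a, 0 ≤ p a) (hp1 : ∑ a : A, p a = 1)
    (hq0 : ∀ a, 0 < q a) (hq1 : ∑ a : A, q a = 1)
    (f : A → ℝ) (M : ℝ) (hf : ∀ a, |f a| ≤ M) :
    |∑ a : A, p a * f a - ∑ a : A, q a * f a| ≤ M * Real.sqrt (2 * klFin p q) := by
  obtain ⟨a₀, -⟩ := Finset.nonempty_of_sum_ne_zero (hp1.trans_ne one_ne_zero)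
  have hM : 0 ≤ M := (abs_nonneg _).trans (hf a₀)
  calc |∑ a, p a * f a - ∑ a, q a * f a|
      = |∑ a, (p a - q a) * f a| := by simp only [sub_mul, Finset.sum_sub_distrib]
    _ ≤ ∑ a, |p a - q a| * M := by
        refine (Finset.abs_sum_le_sum_abs _ _).trans (Finset.sum_le_sum fun a _ ↦ ?_)
        rw [abs_mul]
        exact mul_le_mul_of_nonneg_left (hf a) (abs_nonneg _)
    _ = M * ∑ a, |p a - q a| := by rw [← Finset.sum_mul, mul_comm]
    _ ≤ M * Real.sqrt (2 * klFin p q) := by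
        gcongr
        exact le_sqrt_of_sq_le (sq_sum_abs_sub_le_two_mul_klFin p q hp0 hp1 hq0 hq1)

/-- for pmfs `p, q` with `q > 0` and `|f| ≤ M`,
`|E_p f − E_q f| ≤ M · √(2 · D_KL(p‖q))`. -/
theorem abs_expectation_sub_le_sqrt_kl
    {A : Type*} [Fintype A] [Nonempty A]
    (p q : A → ℝ)
    (hp0 : ∀ a, 0 ≤ p a) (hp1 : ∑ a : A, p a = 1)
    (hq0 : ∀ a, 0 < q a) (hq1 : ∑ a : A, q a = 1)
    (f : A → ℝ) (M : ℝ) (hf : ∀ a, |f a| ≤ M) :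
    |∑ a : A, p a * f a - ∑ a : A, q a * f a| ≤ M * Real.sqrt (2 * klFin p q) :=
  abs_expectation_sub_le_sqrt_kl_general p q hp0 hp1 hq0 hq1 f M hf
end

section
/- Let π and β be policies and ρ an initial probability mass function on Z. Then J(π) − J(β) = (1/(1−γ)) · Σ_{z ∈ Z} d^π(z) · Σ_{a ∈ A} π(a|z) · A^β(z,a). -/
/-!
Write `S = Σ_t γ^t ρ P_π^t`, so that `d^π = (1 - γ) S` and `S = ρ + γ S P_π`. Pairing this with
`D = V^π - V^β` and moving `P_π` to the other side turns `⟨ρ, D⟩` into `⟨S, D - γ P_π D⟩`, and by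
the Bellman equation of `π` the vector `D - γ P_π D` is exactly `Σ_a π(a|·) A^β(·, a)`.
-/

open scoped BigOperators

/-- One application of the state transition matrix `P_μ` induced by policy `μpol`
to a distribution `ρ` over latent states: `(ρ P_μ)(z') = Σ_z ρ(z) Σ_a μ(a|z)·[F(z,a) = z']`. -/
noncomputable def stepDist {Z A : Type*} [Fintype Z] [Fintype A] [DecidableEq Z]
    (F : Z × A → Z) (μpol : Z → A → ℝ) (ρ : Z → ℝ) : Z → ℝ :=
  fun z' => ∑ z : Z, ρ z * ∑ a : A, μpol z a * (if F (z, a) = z' then (1 : ℝ) else 0)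

/-- Discounted occupancy distribution `d^μ(z) = (1−γ) Σ_{t} γ^t (ρ P_μ^t)(z)`. -/
noncomputable def occupancy {Z A : Type*} [Fintype Z] [Fintype A] [DecidableEq Z]
    (F : Z × A → Z) (γ : ℝ) (μpol : Z → A → ℝ) (ρ : Z → ℝ) : Z → ℝ :=
  fun z => (1 - γ) * ∑' t : ℕ, γ ^ t * ((stepDist F μpol)^[t] ρ) z

section StepDist

variable {Z A : Type*} [Fintype Z] [Fintype A] [DecidableEq Z]

noncomputable def discountedVisits (F : Z × A → Z) (γ : ℝ) (μ : Z → A → ℝ) (ρ : Z → ℝ) :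
    Z → ℝ :=
  fun z => ∑' t : ℕ, γ ^ t * ((stepDist F μ)^[t] ρ) z

lemma occupancy_eq_mul_discountedVisits (F : Z × A → Z) (γ : ℝ) (μ : Z → A → ℝ)
    (ρ : Z → ℝ) (z : Z) :
    occupancy F γ μ ρ z = (1 - γ) * discountedVisits F γ μ ρ z :=
  rfl

lemma sum_stepDist_mul (F : Z × A → Z) (μ : Z → A → ℝ) (ρ f : Z → ℝ) :
    ∑ z', stepDist F μ ρ z' * f z' = ∑ z, ρ z * ∑ a, μ z a * f (F (z, a)) := by
  simp only [stepDist, Finset.sum_mul, Finset.mul_sum, mul_ite, mul_one, mul_zero, ite_mul,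
    zero_mul]
  rw [Finset.sum_comm]
  refine Finset.sum_congr rfl fun z _ => ?_
  rw [Finset.sum_comm]
  simp [mul_assoc]

variable (F : Z × A → Z) {μ : Z → A → ℝ}

lemma sum_stepDist (hμ1 : ∀ z, ∑ a, μ z a = 1) (ρ : Z → ℝ) :
    ∑ z', stepDist F μ ρ z' = ∑ z, ρ z := by
  simpa [hμ1] using sum_stepDist_mul F μ ρ fun _ => 1

lemma sum_abs_stepDist_le (hμ0 : ∀ z a, 0 ≤ μ z a) (hμ1 : ∀ z, ∑ a, μ z a = 1)
    (ρ : Z → ℝ) :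
    ∑ z, |stepDist F μ ρ z| ≤ ∑ z, |ρ z| := by
  have hpointwise : ∀ z', |stepDist F μ ρ z'| ≤ stepDist F μ (fun z => |ρ z|) z' := fun z' =>
    (Finset.abs_sum_le_sum_abs _ _).trans_eq <| Finset.sum_congr rfl fun z _ => by
      rw [abs_mul, abs_of_nonneg (Finset.sum_nonneg fun a _ =>
        mul_nonneg (hμ0 z a) (by positivity))]
  exact (Finset.sum_le_sum fun z' _ => hpointwise z').trans_eq (sum_stepDist F hμ1 _)

lemma abs_iterate_stepDist_le (hμ0 : ∀ z a, 0 ≤ μ z a) (hμ1 : ∀ z, ∑ a, μ z a = 1)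
    (ρ : Z → ℝ) (t : ℕ) (z : Z) :
    |(stepDist F μ)^[t] ρ z| ≤ ∑ w, |ρ w| := by
  have hmass : ∑ w, |(stepDist F μ)^[t] ρ w| ≤ ∑ w, |ρ w| := by
    induction t with
    | zero => rfl
    | succ t ih =>
      rw [Function.iterate_succ_apply']
      exact (sum_abs_stepDist_le F hμ0 hμ1 _).trans ih
  exact (Finset.single_le_sum (fun w _ => abs_nonneg _) (Finset.mem_univ z)).trans hmass

lemma summable_discounted_iterate_stepDist (hμ0 : ∀ z a, 0 ≤ μ z a)
    (hμ1 : ∀ z, ∑ a, μ z a = 1) {γ : ℝ} (hγ : |γ| < 1) (ρ : Z → ℝ) (z : Z) :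
    Summable fun t : ℕ => γ ^ t * (stepDist F μ)^[t] ρ z := by
  refine .of_norm_bounded ((summable_geometric_of_abs_lt_one hγ).norm.mul_right (∑ w, |ρ w|))
    fun t => ?_
  rw [norm_mul]
  exact mul_le_mul_of_nonneg_left (abs_iterate_stepDist_le F hμ0 hμ1 ρ t z) (norm_nonneg _)

lemma discountedVisits_eq_add_stepDist (hμ0 : ∀ z a, 0 ≤ μ z a)
    (hμ1 : ∀ z, ∑ a, μ z a = 1) {γ : ℝ} (hγ : |γ| < 1) (ρ : Z → ℝ) (z' : Z) :
    discountedVisits F γ μ ρ z' =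
      ρ z' + γ * stepDist F μ (discountedVisits F γ μ ρ) z' := by
  have hsum := summable_discounted_iterate_stepDist F hμ0 hμ1 hγ ρ
  have hstep : stepDist F μ (discountedVisits F γ μ ρ) z' =
      ∑' t : ℕ, γ ^ t * (stepDist F μ)^[t + 1] ρ z' := by
    simp only [discountedVisits, stepDist, Function.iterate_succ_apply', ← tsum_mul_right]
    rw [← Summable.tsum_finsetSum fun z _ => (hsum z).mul_right _]
    exact tsum_congr fun t => by
      rw [Finset.mul_sum]; exact Finset.sum_congr rfl fun z _ => by ring
  rw [hstep, ← tsum_mul_left, discountedVisits, (hsum z').tsum_eq_zero_add]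
  simp only [pow_zero, one_mul, Function.iterate_zero, id, pow_succ]
  exact congrArg _ (tsum_congr fun t => by ring)

end StepDist

lemma bellman_residual {Z A : Type*} [Fintype A] {F : Z × A → Z} {R : Z × A → ℝ} {γ : ℝ}
    {μ : Z → A → ℝ} (hμ1 : ∀ z, ∑ a, μ z a = 1) {V : Z → ℝ}
    (hV : ∀ z, V z = ∑ a, μ z a * (R (z, a) + γ * V (F (z, a)))) (W : Z → ℝ) (z : Z) :
    V z - W z - γ * ∑ a, μ z a * (V (F (z, a)) - W (F (z, a))) =
      ∑ a, μ z a * (R (z, a) + γ * W (F (z, a)) - W z) := by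
  have hW : ∑ a, μ z a * W z = W z := by rw [← Finset.sum_mul, hμ1, one_mul]
  rw [hV z]
  simp only [mul_sub, mul_add, Finset.sum_sub_distrib, Finset.sum_add_distrib, Finset.mul_sum, hW]
  simp only [mul_left_comm γ]
  ring

theorem performance_difference_general
    {Z A : Type*} [Fintype Z] [Fintype A] [DecidableEq Z]
    (F : Z × A → Z) (R : Z × A → ℝ) (γ : ℝ) (hγ0 : 0 < γ) (hγ1 : γ < 1)
    (π : Z → A → ℝ)
    (hπ0 : ∀ z a, 0 ≤ π z a) (hπ1 : ∀ z, ∑ a : A, π z a = 1)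
    (ρ : Z → ℝ)
    (Vπ Vβ : Z → ℝ)
    (hVπ : ∀ z, Vπ z = ∑ a : A, π z a * (R (z, a) + γ * Vπ (F (z, a)))) :
    (∑ z : Z, ρ z * Vπ z) - (∑ z : Z, ρ z * Vβ z) =
      (1 / (1 - γ)) * ∑ z : Z, occupancy F γ π ρ z *
        ∑ a : A, π z a * ((R (z, a) + γ * Vβ (F (z, a))) - Vβ z) := by
  have hS : ∀ z, ρ z = discountedVisits F γ π ρ z -
      γ * stepDist F π (discountedVisits F γ π ρ) z := fun z => by
    rw [discountedVisits_eq_add_stepDist F hπ0 hπ1 (abs_lt.2 ⟨by linarith, hγ1⟩) ρ z]; ring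
  simp only [occupancy_eq_mul_discountedVisits, mul_assoc, ← Finset.mul_sum]
  set S := discountedVisits F γ π ρ
  set D : Z → ℝ := fun z => Vπ z - Vβ z
  have h1γ : (1 : ℝ) - γ ≠ 0 := by linarith
  calc (∑ z, ρ z * Vπ z) - (∑ z, ρ z * Vβ z)
      = ∑ z, S z * D z - γ * ∑ z, stepDist F π S z * D z := by
        simp only [hS, D, sub_mul, mul_sub, Finset.sum_sub_distrib, Finset.mul_sum, mul_assoc]
        ring
    _ = ∑ z, S z * (D z - γ * ∑ a, π z a * D (F (z, a))) := by
        rw [sum_stepDist_mul, Finset.mul_sum, ← Finset.sum_sub_distrib]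
        exact Finset.sum_congr rfl fun z _ => by ring
    _ = _ := by
        simp only [D, bellman_residual hπ1 hVπ]
        field_simp

/-- performance difference lemma:
`J(π) − J(β) = (1/(1−γ)) Σ_z d^π(z) Σ_a π(a|z) A^β(z,a)`, where the value
functions `Vπ, Vβ` are characterized by their Bellman fixed-point equations,
`Q^β(z,a) = R(z,a) + γ·V^β(F(z,a))` and `A^β(z,a) = Q^β(z,a) − V^β(z)`. -/
theorem performance_difference
    {Z A : Type*} [Fintype Z] [Fintype A] [Nonempty Z] [Nonempty A] [DecidableEq Z]
    (F : Z × A → Z) (R : Z × A → ℝ) (γ : ℝ) (hγ0 : 0 < γ) (hγ1 : γ < 1)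
    (π β : Z → A → ℝ)
    (hπ0 : ∀ z a, 0 ≤ π z a) (hπ1 : ∀ z, ∑ a : A, π z a = 1)
    (hβ0 : ∀ z a, 0 ≤ β z a) (hβ1 : ∀ z, ∑ a : A, β z a = 1)
    (ρ : Z → ℝ) (hρ0 : ∀ z, 0 ≤ ρ z) (hρ1 : ∑ z : Z, ρ z = 1)
    (Vπ Vβ : Z → ℝ)
    (hVπ : ∀ z, Vπ z = ∑ a : A, π z a * (R (z, a) + γ * Vπ (F (z, a))))
    (hVβ : ∀ z, Vβ z = ∑ a : A, β z a * (R (z, a) + γ * Vβ (F (z, a)))) :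
    (∑ z : Z, ρ z * Vπ z) - (∑ z : Z, ρ z * Vβ z) =
      (1 / (1 - γ)) * ∑ z : Z, occupancy F γ π ρ z *
        ∑ a : A, π z a * ((R (z, a) + γ * Vβ (F (z, a))) - Vβ z) :=
  performance_difference_general F R γ hγ0 hγ1 π hπ0 hπ1 ρ Vπ Vβ hVπ
end

section
/- Let π and β be policies and ρ an initial probability mass function on Z. Then Σ_{z ∈ Z} |d^π(z) − d^β(z)| ≤ (γ/(1−γ)) · max_{z ∈ Z} Σ_{a ∈ A} |π(a|z) − β(a|z)|. -/
open scoped BigOperators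

set_option linter.unusedSectionVars false

section Aux
variable {Z A : Type*} [Fintype Z] [Fintype A] [DecidableEq Z]
variable (F : Z × A → Z)

/-- transition kernel -/
noncomputable def ker (μpol : Z → A → ℝ) (z z' : Z) : ℝ :=
  ∑ a : A, μpol z a * (if F (z, a) = z' then (1 : ℝ) else 0)

lemma stepDist_eq (μpol : Z → A → ℝ) (ρ : Z → ℝ) (z' : Z) :
    stepDist F μpol ρ z' = ∑ z : Z, ρ z * ker F μpol z z' := rfl

lemma ker_nonneg {μpol : Z → A → ℝ} (h : ∀ z a, 0 ≤ μpol z a) (z z' : Z) :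
    0 ≤ ker F μpol z z' := by
  refine Finset.sum_nonneg fun a _ => mul_nonneg (h z a) (by positivity)

lemma ker_row_sum {μpol : Z → A → ℝ} (h : ∀ z, ∑ a : A, μpol z a = 1) (z : Z) :
    ∑ z' : Z, ker F μpol z z' = 1 := by
  unfold ker
  rw [Finset.sum_comm]
  simp [Finset.sum_ite_eq, h z]

lemma ker_abs_row_sum (μ₁ μ₂ : Z → A → ℝ) (z : Z) :
    ∑ z' : Z, |ker F μ₁ z z' - ker F μ₂ z z'| ≤ ∑ a : A, |μ₁ z a - μ₂ z a| := by
  have : ∀ z', |ker F μ₁ z z' - ker F μ₂ z z'| ≤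
      ∑ a : A, |μ₁ z a - μ₂ z a| * (if F (z, a) = z' then (1:ℝ) else 0) := by
    intro z'
    unfold ker
    rw [← Finset.sum_sub_distrib]
    refine (Finset.abs_sum_le_sum_abs _ _).trans (le_of_eq ?_)
    refine Finset.sum_congr rfl fun a _ => ?_
    rw [← sub_mul, abs_mul]
    congr 1
    split <;> simp
  refine (Finset.sum_le_sum fun z' _ => this z').trans (le_of_eq ?_)
  rw [Finset.sum_comm]
  simp [Finset.sum_ite_eq]

lemma stepDist_contract {μpol : Z → A → ℝ} (h0 : ∀ z a, 0 ≤ μpol z a)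
    (h1 : ∀ z, ∑ a : A, μpol z a = 1) (σ : Z → ℝ) :
    ∑ z' : Z, |stepDist F μpol σ z'| ≤ ∑ z : Z, |σ z| := by
  calc ∑ z' : Z, |stepDist F μpol σ z'|
      ≤ ∑ z' : Z, ∑ z : Z, |σ z| * ker F μpol z z' := by
        refine Finset.sum_le_sum fun z' _ => ?_
        rw [stepDist_eq]
        refine (Finset.abs_sum_le_sum_abs _ _).trans (le_of_eq ?_)
        refine Finset.sum_congr rfl fun z _ => ?_
        rw [abs_mul, abs_of_nonneg (ker_nonneg F h0 z z')]
    _ = ∑ z : Z, |σ z| := by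
        rw [Finset.sum_comm]
        simp [← Finset.mul_sum, ker_row_sum F h1]

lemma stepDist_sub (μpol : Z → A → ℝ) (σ σ' : Z → ℝ) (z' : Z) :
    stepDist F μpol σ z' - stepDist F μpol σ' z'
      = stepDist F μpol (fun z => σ z - σ' z) z' := by
  simp only [stepDist_eq, ← Finset.sum_sub_distrib, sub_mul]

lemma stepDist_nonneg {μpol : Z → A → ℝ} (h0 : ∀ z a, 0 ≤ μpol z a)
    {ρ : Z → ℝ} (hρ : ∀ z, 0 ≤ ρ z) (z' : Z) : 0 ≤ stepDist F μpol ρ z' := by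
  exact Finset.sum_nonneg fun z _ => mul_nonneg (hρ z) (ker_nonneg F h0 z z')

lemma stepDist_sum {μpol : Z → A → ℝ} (h1 : ∀ z, ∑ a : A, μpol z a = 1)
    {ρ : Z → ℝ} (hρ : ∑ z : Z, ρ z = 1) : ∑ z' : Z, stepDist F μpol ρ z' = 1 := by
  simp only [stepDist_eq]
  rw [Finset.sum_comm]
  simp [← Finset.mul_sum, ker_row_sum F h1, hρ]

lemma iterate_pmf {μpol : Z → A → ℝ} (h0 : ∀ z a, 0 ≤ μpol z a)
    (h1 : ∀ z, ∑ a : A, μpol z a = 1) {ρ : Z → ℝ} (hρ0 : ∀ z, 0 ≤ ρ z)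
    (hρ1 : ∑ z : Z, ρ z = 1) (t : ℕ) :
    (∀ z, 0 ≤ ((stepDist F μpol)^[t] ρ) z) ∧ ∑ z : Z, ((stepDist F μpol)^[t] ρ) z = 1 := by
  induction t with
  | zero => exact ⟨hρ0, hρ1⟩
  | succ t ih =>
    rw [Function.iterate_succ_apply']
    exact ⟨stepDist_nonneg F h0 ih.1, stepDist_sum F h1 ih.2⟩

/-- one-step policy difference bound -/
lemma stepDist_policy_diff (π β : Z → A → ℝ) {ρ : Z → ℝ} (hρ0 : ∀ z, 0 ≤ ρ z)
    (hρ1 : ∑ z : Z, ρ z = 1) {ε : ℝ} (hε : ∀ z, ∑ a : A, |π z a - β z a| ≤ ε) :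
    ∑ z' : Z, |stepDist F π ρ z' - stepDist F β ρ z'| ≤ ε := by
  calc ∑ z' : Z, |stepDist F π ρ z' - stepDist F β ρ z'|
      ≤ ∑ z' : Z, ∑ z : Z, ρ z * |ker F π z z' - ker F β z z'| := by
        refine Finset.sum_le_sum fun z' _ => ?_
        simp only [stepDist_eq, ← Finset.sum_sub_distrib, ← mul_sub]
        refine (Finset.abs_sum_le_sum_abs _ _).trans (le_of_eq ?_)
        refine Finset.sum_congr rfl fun z _ => ?_
        rw [abs_mul, abs_of_nonneg (hρ0 z)]
    _ = ∑ z : Z, ρ z * ∑ z' : Z, |ker F π z z' - ker F β z z'| := by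
        rw [Finset.sum_comm]; simp [Finset.mul_sum]
    _ ≤ ∑ z : Z, ρ z * ε := by
        refine Finset.sum_le_sum fun z _ => ?_
        exact mul_le_mul_of_nonneg_left ((ker_abs_row_sum F π β z).trans (hε z)) (hρ0 z)
    _ = ε := by rw [← Finset.sum_mul, hρ1, one_mul]

lemma iterate_diff_bound (π β : Z → A → ℝ)
    (hπ0 : ∀ z a, 0 ≤ π z a) (hπ1 : ∀ z, ∑ a : A, π z a = 1)
    (hβ0 : ∀ z a, 0 ≤ β z a) (hβ1 : ∀ z, ∑ a : A, β z a = 1)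
    {ρ : Z → ℝ} (hρ0 : ∀ z, 0 ≤ ρ z) (hρ1 : ∑ z : Z, ρ z = 1)
    {ε : ℝ} (hε : ∀ z, ∑ a : A, |π z a - β z a| ≤ ε) (t : ℕ) :
    ∑ z : Z, |((stepDist F π)^[t] ρ) z - ((stepDist F β)^[t] ρ) z| ≤ t * ε := by
  induction t with
  | zero => simp
  | succ t ih =>
    have hq := iterate_pmf F hβ0 hβ1 hρ0 hρ1 t
    calc ∑ z : Z, |((stepDist F π)^[t+1] ρ) z - ((stepDist F β)^[t+1] ρ) z|
        ≤ ∑ z : Z, (|stepDist F π ((stepDist F π)^[t] ρ) z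
              - stepDist F π ((stepDist F β)^[t] ρ) z|
            + |stepDist F π ((stepDist F β)^[t] ρ) z
              - stepDist F β ((stepDist F β)^[t] ρ) z|) := by
          refine Finset.sum_le_sum fun z _ => ?_
          rw [Function.iterate_succ_apply', Function.iterate_succ_apply']
          exact abs_sub_le _ _ _
      _ ≤ t * ε + ε := by
          rw [Finset.sum_add_distrib]
          refine add_le_add ?_ (stepDist_policy_diff F π β hq.1 hq.2 hε)
          calc ∑ z : Z, |stepDist F π ((stepDist F π)^[t] ρ) z
                - stepDist F π ((stepDist F β)^[t] ρ) z|
              = ∑ z : Z, |stepDist F π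
                  (fun w => ((stepDist F π)^[t] ρ) w - ((stepDist F β)^[t] ρ) w) z| := by
                simp only [stepDist_sub]
            _ ≤ _ := (stepDist_contract F hπ0 hπ1 _).trans ih
      _ = (↑(t+1)) * ε := by push_cast; ring

end Aux

/-- total-variation bound between discounted occupancy distributions:
`Σ_z |d^π(z) − d^β(z)| ≤ (γ/(1−γ)) · max_z Σ_a |π(a|z) − β(a|z)|`. -/
theorem occupancy_tv_le
    {Z A : Type*} [Fintype Z] [Fintype A] [Nonempty Z] [Nonempty A] [DecidableEq Z]
    (F : Z × A → Z) (R : Z × A → ℝ) (γ : ℝ) (hγ0 : 0 < γ) (hγ1 : γ < 1)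
    (π β : Z → A → ℝ)
    (hπ0 : ∀ z a, 0 ≤ π z a) (hπ1 : ∀ z, ∑ a : A, π z a = 1)
    (hβ0 : ∀ z a, 0 ≤ β z a) (hβ1 : ∀ z, ∑ a : A, β z a = 1)
    (ρ : Z → ℝ) (hρ0 : ∀ z, 0 ≤ ρ z) (hρ1 : ∑ z : Z, ρ z = 1) :
    ∑ z : Z, |occupancy F γ π ρ z - occupancy F γ β ρ z| ≤
      (γ / (1 - γ)) * ⨆ z : Z, ∑ a : A, |π z a - β z a| := by
  set ε := ⨆ z : Z, ∑ a : A, |π z a - β z a| with hεdef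
  have hεz : ∀ z, ∑ a : A, |π z a - β z a| ≤ ε :=
    fun z => le_ciSup (f := fun w : Z => ∑ a : A, |π w a - β w a|) (Set.Finite.bddAbove (Set.finite_range _)) z
  have hγ0' : (0:ℝ) ≤ γ := hγ0.le
  have h1γ : (0:ℝ) < 1 - γ := by linarith
  have hgeo : Summable (fun t : ℕ => γ ^ t) := summable_geometric_of_lt_one hγ0' hγ1
  -- bounds on iterate values
  have hle1 : ∀ (μ : Z → A → ℝ), (∀ z a, 0 ≤ μ z a) → (∀ z, ∑ a : A, μ z a = 1) →
      ∀ t z, 0 ≤ ((stepDist F μ)^[t] ρ) z ∧ ((stepDist F μ)^[t] ρ) z ≤ 1 := by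
    intro μ h0 h1 t z
    obtain ⟨hn, hs⟩ := iterate_pmf F h0 h1 hρ0 hρ1 t
    exact ⟨hn z, by rw [← hs]; exact Finset.single_le_sum (fun w _ => hn w) (Finset.mem_univ z)⟩
  have hsummul : ∀ (μ : Z → A → ℝ), (∀ z a, 0 ≤ μ z a) → (∀ z, ∑ a : A, μ z a = 1) →
      ∀ z, Summable (fun t : ℕ => γ ^ t * ((stepDist F μ)^[t] ρ) z) := by
    intro μ h0 h1 z
    refine Summable.of_nonneg_of_le (fun t => mul_nonneg (by positivity) (hle1 μ h0 h1 t z).1)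
      (fun t => ?_) hgeo
    nlinarith [(hle1 μ h0 h1 t z).2, pow_nonneg hγ0' t]
  set D : ℕ → Z → ℝ := fun t z => ((stepDist F π)^[t] ρ) z - ((stepDist F β)^[t] ρ) z with hD
  have hDabs : ∀ t z, |γ ^ t * D t z| ≤ 2 * γ ^ t := by
    intro t z
    rw [abs_mul, abs_pow, abs_of_nonneg hγ0']
    have h1 := hle1 π hπ0 hπ1 t z
    have h2 := hle1 β hβ0 hβ1 t z
    have : |D t z| ≤ 2 := by rw [abs_le]; constructor <;> simp only [hD] <;> nlinarith
    nlinarith [pow_nonneg hγ0' t]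
  have hsumDabs : ∀ z, Summable (fun t : ℕ => |γ ^ t * D t z|) := by
    intro z
    refine Summable.of_nonneg_of_le (fun t => abs_nonneg _) (fun t => hDabs t z) ?_
    exact hgeo.mul_left 2
  -- pointwise bound
  have key : ∀ z, |occupancy F γ π ρ z - occupancy F γ β ρ z|
      ≤ (1 - γ) * ∑' t : ℕ, |γ ^ t * D t z| := by
    intro z
    have heq : occupancy F γ π ρ z - occupancy F γ β ρ z
        = (1 - γ) * ∑' t : ℕ, γ ^ t * D t z := by
      unfold occupancy
      rw [← mul_sub, ← Summable.tsum_sub (hsummul π hπ0 hπ1 z) (hsummul β hβ0 hβ1 z)]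
      congr 1
      exact tsum_congr fun t => by simp [hD, mul_sub]
    rw [heq, abs_mul, abs_of_nonneg h1γ.le]
    refine mul_le_mul_of_nonneg_left ?_ h1γ.le
    have hs : Summable fun t : ℕ => ‖γ ^ t * D t z‖ := by
      simp only [Real.norm_eq_abs]; exact hsumDabs z
    have := norm_tsum_le_tsum_norm (f := fun t => γ ^ t * D t z) hs
    simp only [Real.norm_eq_abs] at this
    exact this
  have hε0 : 0 ≤ ε := le_trans (Finset.sum_nonneg fun a _ => abs_nonneg _)
    (hεz (Classical.arbitrary Z))
  have hsumtε : Summable (fun t : ℕ => γ ^ t * ((t : ℝ) * ε)) := by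
    have : Summable (fun t : ℕ => (t : ℝ) * γ ^ t) := by
      simpa using summable_pow_mul_geometric_of_norm_lt_one (k := 1)
        (r := γ) (by rwa [Real.norm_eq_abs, abs_of_nonneg hγ0'])
    exact (this.mul_left ε).congr fun t => by ring
  calc ∑ z : Z, |occupancy F γ π ρ z - occupancy F γ β ρ z|
      ≤ ∑ z : Z, (1 - γ) * ∑' t : ℕ, |γ ^ t * D t z| :=
        Finset.sum_le_sum fun z _ => key z
    _ = (1 - γ) * ∑' t : ℕ, ∑ z : Z, |γ ^ t * D t z| := by
        rw [← Finset.mul_sum, Summable.tsum_finsetSum (fun z _ => hsumDabs z)]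
    _ ≤ (1 - γ) * ∑' t : ℕ, γ ^ t * ((t : ℝ) * ε) := by
        refine mul_le_mul_of_nonneg_left ?_ h1γ.le
        refine Summable.tsum_le_tsum (fun t => ?_) ?_ hsumtε
        · have : ∑ z : Z, |γ ^ t * D t z| = γ ^ t * ∑ z : Z, |D t z| := by
            rw [Finset.mul_sum]
            exact Finset.sum_congr rfl fun z _ => by
              rw [abs_mul, abs_pow, abs_of_nonneg hγ0']
          rw [this]
          exact mul_le_mul_of_nonneg_left
            (iterate_diff_bound F π β hπ0 hπ1 hβ0 hβ1 hρ0 hρ1 hεz t) (by positivity)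
        · refine Summable.of_nonneg_of_le (fun t => Finset.sum_nonneg fun z _ => abs_nonneg _)
            (fun t => ?_) (hgeo.mul_left (2 * (Fintype.card Z : ℝ)))
          calc ∑ z : Z, |γ ^ t * D t z| ≤ ∑ z : Z, 2 * γ ^ t :=
                Finset.sum_le_sum fun z _ => hDabs t z
            _ = 2 * (Fintype.card Z : ℝ) * γ ^ t := by
                simp [Finset.sum_const]; ring
    _ = γ / (1 - γ) * ε := by
        have : ∑' t : ℕ, γ ^ t * ((t : ℝ) * ε) = ε * ∑' t : ℕ, (t : ℝ) * γ ^ t := by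
          rw [← tsum_mul_left]
          exact tsum_congr fun t => by ring
        rw [this, tsum_coe_mul_geometric_of_norm_lt_one
          (by rwa [Real.norm_eq_abs, abs_of_nonneg hγ0'])]
        field_simp
end

section
/- Let (Ω, 𝔽, P) be a probability space, E a measurable space, q a probability measure on E, and (X_i)_{i ∈ ℕ} an i.i.d. sequence of E-valued random variables on Ω, each with distribution q. Let f, g : E → ℝ be measurable with g ≥ 0 everywhere, such that g and f·g are q-integrable and ∫ g dq > 0. Then P-almost surely, (Σ_{i=0}^{n−1} f(X_i)·g(X_i)) / (Σ_{i=0}^{n−1} g(X_i)) converges to (∫ f·g dq)/(∫ g dq) as n → ∞. -/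
open MeasureTheory ProbabilityTheory Filter Finset Topology

theorem tendsto_div_of_tendsto_div_natCast {a b : ℕ → ℝ} {A B : ℝ}
    (ha : Tendsto (fun n : ℕ => a n / n) atTop (𝓝 A))
    (hb : Tendsto (fun n : ℕ => b n / n) atTop (𝓝 B)) (hB : B ≠ 0) :
    Tendsto (fun n => a n / b n) atTop (𝓝 (A / B)) := by
  refine (ha.div hb hB).congr' ?_
  filter_upwards [eventually_ne_atTop 0] with n hn
  exact div_div_div_cancel_right₀ (Nat.cast_ne_zero.mpr hn) _ _

theorem strong_law_ae_comp {Ω E : Type*} [MeasurableSpace Ω] [MeasurableSpace E]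
    {P : Measure Ω} {q : Measure E} {X : ℕ → Ω → E} (hX : ∀ i, Measurable (X i))
    (hindep : Pairwise fun i j => X i ⟂ᵢ[P] X j) (hdist : ∀ i, P.map (X i) = q)
    {u : E → ℝ} (hu : Measurable u) (hui : Integrable u q) :
    ∀ᵐ ω ∂P, Tendsto (fun n : ℕ => (∑ i ∈ range n, u (X i ω)) / n) atTop
      (𝓝 (∫ x, u x ∂q)) := by
  have hident (i : ℕ) : IdentDistrib (X i) (X 0) P P :=
    ⟨(hX i).aemeasurable, (hX 0).aemeasurable, by rw [hdist i, hdist 0]⟩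
  have hint : Integrable (u ∘ X 0) P := by
    rw [← hdist 0] at hui
    exact (integrable_map_measure hu.aestronglyMeasurable (hX 0).aemeasurable).mp hui
  have hmean : ∫ ω, u (X 0 ω) ∂P = ∫ x, u x ∂q := by
    rw [← integral_map (hX 0).aemeasurable hu.aestronglyMeasurable, hdist 0]
  simpa only [hmean] using strong_law_ae_real (fun i ω => u (X i ω)) hint
    (fun i j hij => (hindep hij).comp hu hu) (fun i => (hident i).comp hu)

theorem selfNormalized_monteCarlo_consistency_general
    {Ω E : Type*} [MeasurableSpace Ω] [MeasurableSpace E]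
    (P : Measure Ω)
    (q : Measure E)
    (X : ℕ → Ω → E) (hXmeas : ∀ i, Measurable (X i))
    (hindep : iIndepFun X P)
    (hdist : ∀ i, Measure.map (X i) P = q)
    (f g : E → ℝ) (hf : Measurable f) (hg : Measurable g)
    (hgint : Integrable g q) (hfgint : Integrable (fun x => f x * g x) q)
    (hgpos : 0 < ∫ x, g x ∂q) :
    ∀ᵐ ω ∂P, Tendsto
      (fun n => (∑ i ∈ Finset.range n, f (X i ω) * g (X i ω)) /
        (∑ i ∈ Finset.range n, g (X i ω)))
      atTop (nhds ((∫ x, f x * g x ∂q) / (∫ x, g x ∂q))) := by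
  have hpair : Pairwise fun i j => X i ⟂ᵢ[P] X j := fun _ _ hij => hindep.indepFun hij
  filter_upwards [strong_law_ae_comp hXmeas hpair hdist (hf.mul hg) hfgint,
    strong_law_ae_comp hXmeas hpair hdist hg hgint] with ω hfg_mean hg_mean
  exact tendsto_div_of_tendsto_div_natCast hfg_mean hg_mean hgpos.ne'

/-- consistency of the self-normalized Monte Carlo estimator:
for an i.i.d. sequence `(X_i)` with common distribution `q`, and measurable `f, g`
with `g ≥ 0`, `g` and `f·g` `q`-integrable and `∫ g dq > 0`, almost surely
`(Σ_{i<n} f(X_i)·g(X_i)) / (Σ_{i<n} g(X_i)) → (∫ f·g dq)/(∫ g dq)`. -/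
theorem selfNormalized_monteCarlo_consistency
    {Ω E : Type*} [MeasurableSpace Ω] [MeasurableSpace E]
    (P : Measure Ω) [IsProbabilityMeasure P]
    (q : Measure E) [IsProbabilityMeasure q]
    (X : ℕ → Ω → E) (hXmeas : ∀ i, Measurable (X i))
    (hindep : iIndepFun X P)
    (hdist : ∀ i, Measure.map (X i) P = q)
    (f g : E → ℝ) (hf : Measurable f) (hg : Measurable g)
    (hgnn : ∀ x, 0 ≤ g x)
    (hgint : Integrable g q) (hfgint : Integrable (fun x => f x * g x) q)
    (hgpos : 0 < ∫ x, g x ∂q) :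
    ∀ᵐ ω ∂P, Tendsto
      (fun n => (∑ i ∈ Finset.range n, f (X i ω) * g (X i ω)) /
        (∑ i ∈ Finset.range n, g (X i ω)))
      atTop (nhds ((∫ x, f x * g x ∂q) / (∫ x, g x ∂q))) :=
  selfNormalized_monteCarlo_consistency_general P q X hXmeas hindep hdist f g hf hg hgint hfgint
    hgpos
end
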